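/- Let (D, V, X) have joint density and let D^t = H_t^{-1}(F_D(D)) with H_t(d) = F_D(d) + t(G_D(d) − F_D(d)), where F_D is continuous, strictly increasing with density f_D > 0. If C is the copula of (D^t, V, X) with C(H_t(d), F_V(v), F_X(x)) = F_{D^t,V,X}(d,v,x), then ∂_t C(H_t(d), F_V(v), F_X(x))|_{t=0} = F_{V,X|D}(v,x|d)·(G_D(d) − F_D(d)). -/

import Mathlib

/-!
At `t = 0` the identity defining `C` says `C (F_D a, F_V v, F_X x) = F_{D,V,X}(a, v, x)`
for every `a`, and since `F_D` is a continuous strictly increasing function its range is a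
neighbourhood of `F_D d`. Hence near `F_D d` the map `u ↦ C (u, F_V v, F_X x)` is
`F_{D,V,X}(F_D⁻¹ u, v, x)`, whose derivative at `F_D d` is `F_{V,X|D}(v,x|d) f_D(d) / f_D(d)`.
The chain rule along the affine path `t ↦ H_t(d) = F_D d + t (G_D d - F_D d)` finishes the proof.
-/

open Filter Topology Set MeasureTheory ProbabilityTheory

theorem StrictMono.csInf_setOf_apply_le_apply {α β : Type*} [ConditionallyCompleteLinearOrder α]
    [Preorder β] {F : α → β} (hF : StrictMono F) (y : α) : sInf {a | F y ≤ F a} = y := by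
  simp_rw [hF.le_iff_le]
  exact csInf_Ici

section StrictMonoInverse

variable {α δ : Type*} [ConditionallyCompleteLinearOrder α] [TopologicalSpace α] [OrderTopology α]
  [DenselyOrdered α] [NoMinOrder α] [NoMaxOrder α]
  [LinearOrder δ] [TopologicalSpace δ] [OrderTopology δ] {F : α → δ}

theorem StrictMono.range_mem_nhds (hFc : Continuous F) (hFm : StrictMono F) (a : α) :
    range F ∈ 𝓝 (F a) := by
  obtain ⟨b, hb⟩ := exists_lt a
  obtain ⟨c, hc⟩ := exists_gt a
  refine mem_of_superset (Ioo_mem_nhds (hFm hb) (hFm hc)) ?_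
  exact (intermediate_value_Ioo (hb.trans hc).le hFc.continuousOn).trans (image_subset_range _ _)

theorem StrictMono.continuousAt_invFun [Nonempty α] (hFc : Continuous F) (hFm : StrictMono F)
    (a : α) : ContinuousAt (Function.invFun F) (F a) := by
  have hinv := Function.leftInverse_invFun hFm.injective
  refine continuousAt_of_monotoneOn_of_image_mem_nhds ?_ (hFm.range_mem_nhds hFc a) ?_
  · rintro _ ⟨b, rfl⟩ _ ⟨c, rfl⟩ hbc
    rw [hinv b, hinv c]
    exact hFm.le_iff_le.mp hbc
  · rw [← range_comp, hinv.comp_eq_id, range_id]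
    exact univ_mem

end StrictMonoInverse

theorem HasDerivAt.of_comp_strictMono {φ F J : ℝ → ℝ} {F' j d : ℝ}
    (hFc : Continuous F) (hFm : StrictMono F) (hF : HasDerivAt F F' d) (hF' : F' ≠ 0)
    (hJ : HasDerivAt J j d) (hφ : ∀ a, φ (F a) = J a) : HasDerivAt φ (j / F') (F d) := by
  set q := Function.invFun F
  have hinv : ∀ a, q (F a) = a := Function.leftInverse_invFun hFm.injective
  have hq : HasDerivAt q F'⁻¹ (F d) := by
    refine HasDerivAt.of_local_left_inverse (hFm.continuousAt_invFun hFc d) (by rwa [hinv]) hF' ?_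
    filter_upwards [hFm.range_mem_nhds hFc d] with u ⟨a, hau⟩
    rw [← hau, hinv]
  have hJq : HasDerivAt (J ∘ q) (j * F'⁻¹) (F d) := by
    refine HasDerivAt.comp _ ?_ hq
    rwa [hinv]
  refine hJq.congr_of_eventuallyEq ?_
  filter_upwards [hFm.range_mem_nhds hFc d] with u ⟨a, hau⟩
  rw [← hau, hφ, Function.comp_apply, hinv]

theorem copula_derivative_triangular_general
    {Ω : Type*} [MeasureSpace Ω]
    (D V X : Ω → ℝ)
    (F G f FV FX : ℝ → ℝ) (FVXgD : ℝ → ℝ → ℝ → ℝ) -- F_D, G_D, f_D, F_V, F_X, F_{V,X|D}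
    (hFcont : Continuous F) (hFmono : StrictMono F)
    (hf : ∀ d, HasDerivAt F (f d) d) (hfpos : ∀ d, 0 < f d)
    -- conditional CDF of (V,X) given D, via
    -- ∂_d F_{D,V,X}(d,v,x) = F_{V,X|D}(v,x|d) f_D(d)
    (hFVXgD : ∀ d v x,
      HasDerivAt (fun a => (ℙ {ω | D ω ≤ a ∧ V ω ≤ v ∧ X ω ≤ x}).toReal)
        (FVXgD v x d * f d) d)
    (H : ℝ → ℝ → ℝ)
    (hH : ∀ t d, H t d = F d + t * (G d - F d))
    (Hinv : ℝ → ℝ → ℝ)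
    (hHinv : ∀ t u, Hinv t u = sInf {a : ℝ | u ≤ H t a})
    -- Sklar: C is the copula of (D^t, V, X)
    (C : ℝ → ℝ → ℝ → ℝ)
    (hC : ∀ t ∈ Icc (0:ℝ) 1, ∀ d v x,
      C (H t d) (FV v) (FX x)
        = (ℙ {ω | Hinv t (F (D ω)) ≤ d ∧ V ω ≤ v ∧ X ω ≤ x}).toReal)
    (d v x : ℝ) :
    HasDerivWithinAt (fun t => C (H t d) (FV v) (FX x))
      (FVXgD v x d * (G d - F d)) (Ici (0:ℝ)) 0 := by
  have hH0 : ∀ a, H 0 a = F a := fun a => by rw [hH]; ring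
  have hHinv0 : ∀ y, Hinv 0 (F y) = y := fun y => by
    simpa only [hHinv, hH0] using hFmono.csInf_setOf_apply_le_apply y
  have hCF : ∀ a, C (F a) (FV v) (FX x) = (ℙ {ω | D ω ≤ a ∧ V ω ≤ v ∧ X ω ≤ x}).toReal :=
    fun a => by simpa only [hH0, hHinv0] using hC 0 ⟨le_rfl, zero_le_one⟩ a v x
  have hCd : HasDerivAt (fun u => C u (FV v) (FX x)) (FVXgD v x d) (H 0 d) := by
    rw [hH0, ← mul_div_cancel_right₀ (FVXgD v x d) (hfpos d).ne']
    exact .of_comp_strictMono hFcont hFmono (hf d) (hfpos d).ne' (hFVXgD d v x) hCF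
  have hHd : HasDerivAt (fun t => H t d) (G d - F d) 0 := by
    simp_rw [hH]
    simpa using ((hasDerivAt_id (0 : ℝ)).mul_const (G d - F d)).const_add (F d)
  exact (hCd.comp 0 hHd).hasDerivWithinAt

/-- derivative of the copula of `(D^t, V, X)` under the marginal
perturbation `H_t = F_D + t(G_D − F_D)`, `D^t = H_t⁻¹(F_D(D))`. If `C` is the
copula with `C(H_t(d), F_V(v), F_X(x)) = F_{D^t,V,X}(d,v,x)`, then
`∂_t C(H_t(d), F_V(v), F_X(x))|_{t=0} = F_{V,X|D}(v,x|d)·(G_D(d) − F_D(d))`. -/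
theorem copula_derivative_triangular
    {Ω : Type*} [MeasureSpace Ω] [IsProbabilityMeasure (ℙ : Measure Ω)]
    (D V X : Ω → ℝ) (hD : Measurable D) (hV : Measurable V) (hX : Measurable X)
    (F G f FV FX : ℝ → ℝ) (FVXgD : ℝ → ℝ → ℝ → ℝ) -- F_D, G_D, f_D, F_V, F_X, F_{V,X|D}
    (hF : ∀ d, F d = (ℙ {ω | D ω ≤ d}).toReal)
    (hFV : ∀ v, FV v = (ℙ {ω | V ω ≤ v}).toReal)
    (hFX : ∀ x, FX x = (ℙ {ω | X ω ≤ x}).toReal)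
    (hGcdf : Monotone G)
    (hFcont : Continuous F) (hFmono : StrictMono F)
    (hf : ∀ d, HasDerivAt F (f d) d) (hfpos : ∀ d, 0 < f d)
    -- conditional CDF of (V,X) given D, via
    -- ∂_d F_{D,V,X}(d,v,x) = F_{V,X|D}(v,x|d) f_D(d)
    (hFVXgD : ∀ d v x,
      HasDerivAt (fun a => (ℙ {ω | D ω ≤ a ∧ V ω ≤ v ∧ X ω ≤ x}).toReal)
        (FVXgD v x d * f d) d)
    (H : ℝ → ℝ → ℝ)
    (hH : ∀ t d, H t d = F d + t * (G d - F d))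
    (Hinv : ℝ → ℝ → ℝ)
    (hHinv : ∀ t u, Hinv t u = sInf {a : ℝ | u ≤ H t a})
    -- Sklar: C is the copula of (D^t, V, X)
    (C : ℝ → ℝ → ℝ → ℝ)
    (hC : ∀ t ∈ Icc (0:ℝ) 1, ∀ d v x,
      C (H t d) (FV v) (FX x)
        = (ℙ {ω | Hinv t (F (D ω)) ≤ d ∧ V ω ≤ v ∧ X ω ≤ x}).toReal)
    (d v x : ℝ) :
    HasDerivWithinAt (fun t => C (H t d) (FV v) (FX x))
      (FVXgD v x d * (G d - F d)) (Ici (0:ℝ)) 0 :=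
  copula_derivative_triangular_general D V X F G f FV FX FVXgD hFcont hFmono hf hfpos hFVXgD H hH
    Hinv hHinv C hC d v x
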